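/- arXiv:1010.4989 — 7 statements merged into one kernel-verified Lean document; each statement's English description precedes it below -/
import Mathlib

section
/- For all y ∈ ℝ and all z ∈ ℝ with z < −M', one has h(y, z) > 0. -/
/-!
As a polynomial in `z`, `h(y, z)` factors as
`(1 - z) * (2 / (1 + e^{-y}) - z - 2 (1 - z) (μ + δ (1 + e^y) z) / σ²)`.
For `z < 0` the second factor is then positive as soon as `μ + δ (1 + e^y) z ≤ 0`, and
`z < -M'` forces `-z > μ / δ`, which gives exactly that.
-/

open Real Set

/-- The right-hand side of the ODE g''(y) = h(y, g'(y)). -/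
noncomputable def h (μ σ δ y z : ℝ) : ℝ :=
  (-(2*μ)/σ^2 + 2/(1 + exp (-y)))
  + ((4*μ)/σ^2 - 2/(1 + exp (-y)) - 1 - (2*δ/σ^2)*(1 + exp y)) * z
  + (-(2*μ)/σ^2 + 1 + (4*δ/σ^2)*(1 + exp y)) * z^2
  - (2*δ/σ^2)*(1 + exp y) * z^3

/-- The constant M' from the proof of Proposition p:FBVP. -/
noncomputable def M' (μ σ δ : ℝ) : ℝ :=
  max ((4*(μ + σ^2)/δ) ^ ((1:ℝ)/3))
    (max (Real.sqrt (8*μ/δ)) (8 + (4*μ + 2*σ^2)/δ))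

theorem h_eq_mul (μ σ δ y z : ℝ) :
    h μ σ δ y z = (1 - z) *
      (2 / (1 + exp (-y)) - z - 2 * (1 - z) * (μ + δ * (1 + exp y) * z) / σ ^ 2) := by
  unfold h
  ring

theorem h_pos_of_neg {μ σ δ y z : ℝ} (hz : z < 0) (hcubic : μ + δ * (1 + exp y) * z ≤ 0) :
    0 < h μ σ δ y z := by
  rw [h_eq_mul]
  have hF : 0 < 2 / (1 + exp (-y)) := by positivity
  have hrest : 2 * (1 - z) * (μ + δ * (1 + exp y) * z) / σ ^ 2 ≤ 0 :=
    div_nonpos_of_nonpos_of_nonneg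
      (mul_nonpos_of_nonneg_of_nonpos (by linarith) hcubic) (sq_nonneg σ)
  exact mul_pos (by linarith) (by linarith)

theorem div_lt_M' {μ σ δ : ℝ} (hμ : 0 ≤ μ) (hδ : 0 ≤ δ) : μ / δ < M' μ σ δ := by
  have hdiv : μ / δ ≤ (4 * μ + 2 * σ ^ 2) / δ := by gcongr; nlinarith [sq_nonneg σ]
  exact hdiv.trans_lt ((lt_add_of_pos_left _ (by norm_num)).trans_le
    ((le_max_right _ _).trans (le_max_right _ _)))

theorem h_pos_of_lt_neg_M'_general
    (μ σ δ : ℝ) (hμ : 0 < μ) (hδ : 0 < δ) :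
    ∀ y z : ℝ, z < -(M' μ σ δ) → 0 < h μ σ δ y z := by
  intro y z hz
  have hμz : μ / δ < -z := by linarith [div_lt_M' (σ := σ) hμ.le hδ.le]
  have hz0 : z < 0 := by linarith [div_nonneg hμ.le hδ.le]
  have hμδz : μ < δ * -z := (div_lt_iff₀' hδ).mp hμz
  refine h_pos_of_neg hz0 ?_
  nlinarith [mul_pos (mul_pos hδ (exp_pos y)) (neg_pos.mpr hz0)]

/-- For slopes below -M', the right-hand side of the ODE is positive. -/
theorem h_pos_of_lt_neg_M'
    (μ σ δ : ℝ) (hμ : 0 < μ) (hμσ : μ < σ^2) (hδ : 0 < δ) :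
    ∀ y z : ℝ, z < -(M' μ σ δ) → 0 < h μ σ δ y z :=
  h_pos_of_lt_neg_M'_general μ σ δ hμ hδ
end

section
/- For all y ∈ ℝ and all z ∈ ℝ with z > M', one has h(y, z) < 0. -/
open Real Set

/-
Multiplied by σ², the cubic h(y, ·) factors as (z - 1) times a quadratic whose dominant part is
σ² z - 2δ (1 + e^y) z (z - 1). For z > 1 the quadratic is therefore negative as soon as
σ² ≤ 2δ (z - 1), and the last entry of M' is far beyond that threshold.
-/

theorem sq_mul_h_eq (μ δ y z : ℝ) {σ : ℝ} (hσ : σ ≠ 0) :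
    σ^2 * h μ σ δ y z = (z - 1) * (σ^2 * (z - 2 / (1 + exp (-y))) - 2*μ*(z - 1)
      - 2*δ*(1 + exp y)*z*(z - 1)) := by
  unfold h
  field_simp
  ring

theorem h_neg_of_sq_le_two_mul_sub_one {μ σ δ z : ℝ} (y : ℝ) (hμ : 0 ≤ μ) (hσ : σ ≠ 0)
    (hδ : 0 < δ) (hz : σ^2 ≤ 2*δ*(z - 1)) : h μ σ δ y z < 0 := by
  have hσ2 : 0 < σ^2 := by positivity
  have hz1 : 0 < z - 1 := pos_of_mul_pos_right (hσ2.trans_le hz) (by positivity)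
  have ht : 0 < 2 / (1 + exp (-y)) := by positivity
  have hE : 0 < exp y := exp_pos y
  have hfactor : σ^2 * (z - 2 / (1 + exp (-y))) - 2*μ*(z - 1)
      - 2*δ*(1 + exp y)*z*(z - 1) < 0 := by
    nlinarith [mul_pos hσ2 ht, mul_nonneg hμ hz1.le, mul_le_mul_of_nonneg_left hz hz1.le,
      mul_pos (mul_pos (mul_pos hδ hE) hz1) hz1]
  have hprod : σ^2 * h μ σ δ y z < 0 := by
    rw [sq_mul_h_eq μ δ y z hσ]
    exact mul_neg_of_pos_of_neg hz1 hfactor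
  exact neg_of_mul_neg_right hprod hσ2.le

theorem sq_le_two_mul_sub_one_of_M'_lt {μ σ δ z : ℝ} (hμ : 0 ≤ μ) (hδ : 0 < δ)
    (hz : M' μ σ δ < z) : σ^2 ≤ 2*δ*(z - 1) := by
  have hz' : 8 + (4*μ + 2*σ^2)/δ < z :=
    ((le_max_right _ _).trans (le_max_right _ _)).trans_lt hz
  have hbound : 4*μ + 2*σ^2 < δ*(z - 8) :=
    (div_lt_iff₀' hδ).mp (by linarith)
  nlinarith [sq_nonneg σ]

/-- For slopes above M', the right-hand side of the ODE is negative. -/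
theorem h_neg_of_gt_M'
    (μ σ δ : ℝ) (hμ : 0 < μ) (hμσ : μ < σ^2) (hδ : 0 < δ) :
    ∀ y z : ℝ, M' μ σ δ < z → h μ σ δ y z < 0 := by
  intro y z hz
  have hσ : σ ≠ 0 := by
    rintro rfl
    norm_num at hμσ
    exact hμσ.not_gt hμ
  exact h_neg_of_sq_le_two_mul_sub_one y hμ.le hσ hδ
    (sq_le_two_mul_sub_one_of_M'_lt hμ.le hδ hz)
end

section
/- Let a < b be real numbers and let g : ℝ → ℝ be twice differentiable on [a, b] with g''(y) = h(y, g'(y)) for all y ∈ [a, b] and g'(a) = 0. Then g'(y) ∈ [−M', M'] for all y ∈ [a, b]. -/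
open Real Set

/-! A constant `M` with `h(y, M) < 0 < h(y, -M)` for all `y` is a barrier for the first-order
equation `f' = h(y, f)` satisfied by `f = g'`: starting inside `[-M, M]`, a solution can
never cross either endpoint. The cubic `h(y, ·)` factors through `z - 1`, which makes its sign
at `±M` transparent once `M` is large compared with `σ² / δ` and `μ / δ`. -/

theorem mem_Icc_of_hasDerivWithinAt_boundary {f f' : ℝ → ℝ} {a b M : ℝ}
    (hf : ContinuousOn f (Icc a b)) (hf' : ∀ x ∈ Ico a b, HasDerivWithinAt f (f' x) (Ici x) x)
    (ha : f a ∈ Icc (-M) M) (hupper : ∀ x ∈ Ico a b, f x = M → f' x < 0)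
    (hlower : ∀ x ∈ Ico a b, f x = -M → 0 < f' x) :
    ∀ x ∈ Icc a b, f x ∈ Icc (-M) M := by
  have hconst : ∀ x, HasDerivAt (fun _ : ℝ => M) 0 x := fun x => hasDerivAt_const x M
  intro x hx
  constructor
  · have := image_le_of_deriv_right_lt_deriv_boundary (f := fun x => -f x) hf.neg
      (fun x hx => (hf' x hx).neg) (neg_le.mpr ha.1) hconst
      (fun x hx hfx => neg_neg_iff_pos.mpr (hlower x hx (neg_eq_iff_eq_neg.mp hfx))) hx
    linarith
  · exact image_le_of_deriv_right_lt_deriv_boundary hf hf' ha.2 hconst hupper hx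

theorem sq_mul_h {σ : ℝ} (hσ : σ ≠ 0) (μ δ y z : ℝ) :
    σ^2 * h μ σ δ y z = (z - 1) *
      (σ^2 * (z - 2 / (1 + exp (-y))) - 2 * (z - 1) * (δ * (1 + exp y) * z + μ)) := by
  unfold h
  field_simp
  ring

theorem h_lt_zero {μ σ δ z : ℝ} (hσ : σ ≠ 0) (hμ : 0 ≤ μ) (hz : 1 < z)
    (hδz : σ^2 ≤ 2 * δ * (z - 1)) (y : ℝ) : h μ σ δ y z < 0 := by
  have hσ2 : 0 < σ^2 := by positivity
  have hδ : 0 < δ := by nlinarith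
  have hbracket : σ^2 * (z - 2 / (1 + exp (-y))) < 2 * (z - 1) * (δ * (1 + exp y) * z + μ) :=
    calc σ^2 * (z - 2 / (1 + exp (-y))) < σ^2 * z := by
          gcongr; exact sub_lt_self z (by positivity)
      _ ≤ 2 * δ * (z - 1) * z := by gcongr
      _ ≤ 2 * (z - 1) * (δ * (1 + exp y) * z + μ) := by
          have hz0 : 0 < z := by linarith
          nlinarith [mul_pos (mul_pos hδ (sub_pos.mpr hz)) (mul_pos (exp_pos y) hz0)]
  have := sq_mul_h hσ μ δ y z
  nlinarith [mul_pos (sub_pos.mpr hz) (sub_pos.mpr hbracket)]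

theorem zero_lt_h_neg {μ σ δ w : ℝ} (hσ : σ ≠ 0) (hμ : 0 ≤ μ) (hw : 0 ≤ w)
    (hδw : μ ≤ δ * w) (y : ℝ) : 0 < h μ σ δ y (-w) := by
  have hσ2 : 0 < σ^2 := by positivity
  have hdrift : μ ≤ δ * (1 + exp y) * w :=
    calc μ ≤ δ * w := hδw
      _ ≤ (1 + exp y) * (δ * w) :=
          le_mul_of_one_le_left (hμ.trans hδw) (by linarith [exp_pos y])
      _ = δ * (1 + exp y) * w := by ring
  have hbracket :
      0 < σ^2 * (w + 2 / (1 + exp (-y))) + 2 * (w + 1) * (δ * (1 + exp y) * w - μ) := by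
    have : 0 < w + 2 / (1 + exp (-y)) := by positivity
    nlinarith
  have := sq_mul_h hσ μ δ y (-w)
  nlinarith [mul_pos (by linarith : 0 < w + 1) hbracket]

theorem le_mul_M' {μ σ δ : ℝ} (hδ : 0 < δ) :
    8 * δ + 4 * μ + 2 * σ^2 ≤ δ * M' μ σ δ := by
  have : 8 + (4 * μ + 2 * σ^2) / δ ≤ M' μ σ δ := le_max_of_le_right (le_max_right _ _)
  calc 8 * δ + 4 * μ + 2 * σ^2 = δ * (8 + (4 * μ + 2 * σ^2) / δ) := by
        rw [mul_add, mul_div_cancel₀ _ hδ.ne']; ring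
    _ ≤ δ * M' μ σ δ := by gcongr

theorem deriv_bounded_of_ODE_general
    (μ σ δ a b : ℝ) (hμ : 0 < μ) (hμσ : μ < σ^2) (hδ : 0 < δ)
    (g : ℝ → ℝ)
    (hg' : ∀ y ∈ Icc a b, DifferentiableAt ℝ (deriv g) y)
    (hODE : ∀ y ∈ Icc a b, deriv (deriv g) y = h μ σ δ y (deriv g y))
    (h0 : deriv g a = 0) :
    ∀ y ∈ Icc a b, deriv g y ∈ Icc (-(M' μ σ δ)) (M' μ σ δ) := by
  have hσ : σ ≠ 0 := (pow_ne_zero_iff two_ne_zero).mp (hμ.trans hμσ).ne'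
  have hM := le_mul_M' (μ := μ) (σ := σ) hδ
  have hM1 : 1 < M' μ σ δ := by nlinarith [sq_nonneg σ]
  refine mem_Icc_of_hasDerivWithinAt_boundary (f' := fun y => h μ σ δ y (deriv g y))
    (fun y hy => (hg' y hy).continuousAt.continuousWithinAt)
    (fun y hy => ?_) (by rw [h0]; constructor <;> linarith) ?_ ?_
  · have hy' := Ico_subset_Icc_self hy
    exact (hODE y hy' ▸ (hg' y hy').hasDerivAt).hasDerivWithinAt
  · intro y _ hy
    rw [hy]
    exact h_lt_zero hσ hμ.le hM1 (by linarith [sq_nonneg σ]) y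
  · intro y _ hy
    rw [hy]
    exact zero_lt_h_neg hσ hμ.le (by linarith) (by linarith [sq_nonneg σ]) y

/-- A solution of the ODE g''(y) = h(y, g'(y)) on [a, b] starting with slope 0
has slope bounded by M' in absolute value. -/
theorem deriv_bounded_of_ODE
    (μ σ δ a b : ℝ) (hμ : 0 < μ) (hμσ : μ < σ^2) (hδ : 0 < δ) (hab : a < b)
    (g : ℝ → ℝ)
    (hg : ∀ y ∈ Icc a b, DifferentiableAt ℝ g y)
    (hg' : ∀ y ∈ Icc a b, DifferentiableAt ℝ (deriv g) y)
    (hODE : ∀ y ∈ Icc a b, deriv (deriv g) y = h μ σ δ y (deriv g y))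
    (h0 : deriv g a = 0) :
    ∀ y ∈ Icc a b, deriv g y ∈ Icc (-(M' μ σ δ)) (M' μ σ δ) :=
  deriv_bounded_of_ODE_general μ σ δ a b hμ hμσ hδ g hg' hODE h0
end

section
/- Let Δ > 0 and let g : ℝ → ℝ be twice continuously differentiable on [y₀ − Δ, ∞) with g(y₀ − Δ) = C̄, g'(y₀ − Δ) = 0, and g''(y) = h(y, g'(y)) for all y ≥ y₀ − Δ. Then the set Z := { y > y₀ − Δ : g'(y) = 0 } is nonempty, and its infimum β̄_Δ := inf Z satisfies: β̄_Δ > y₀, g'(β̄_Δ) = 0, and g'(y) < 0 for all y ∈ (y₀ − Δ, β̄_Δ); in particular g is strictly decreasing on [y₀ − Δ, β̄_Δ]. -/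
/-!
Write `v = g'` and `a = y₀ - Δ`. The constant coefficient of the ODE is
`h(y, 0) = 2 (sigmoid y - sigmoid y₀)`, negative before `y₀` and positive after it. Since
`v a = 0` and `v' a = h(a, 0) < 0`, `v` is negative just after `a`. If `v` never vanished again
it would stay negative; but for large `y` and `z ≤ 0` we have `h(y, z) ≥ h(y, 0) ≥ c > 0`, so `v`
would grow linearly, a contradiction. Hence the first zero `β` exists and `v < 0` on `(a, β)`.
Finally `β ≤ y₀` is impossible: if `β < y₀` then `v' β = h(β, 0) < 0`, and if `β = y₀` then
`v' β = 0` while `v'' β = 2 sigmoid' y₀ > 0`; either way `v > 0` just before `β`.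
-/

open Real Set

/-- The zero of the constant coefficient of the ODE. -/
noncomputable def y0 (μ σ : ℝ) : ℝ := -Real.log (σ^2/μ - 1)

open Filter Topology

section SignNearZero

variable {f : ℝ → ℝ} {x₀ : ℝ}

lemma eventually_nhdsLT_neg_of_deriv_pos (hf : 0 < deriv f x₀) (hx : f x₀ = 0) :
    ∀ᶠ x in 𝓝[<] x₀, f x < 0 := by
  filter_upwards [nhdsWithin_le_nhds (eventually_nhdsWithin_sign_eq_of_deriv_pos hf hx),
    self_mem_nhdsWithin] with x hsign (hlt : x < x₀)
  rwa [← sign_eq_neg_one_iff, hsign, sign_eq_neg_one_iff, sub_neg]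

lemma eventually_nhdsLT_pos_of_deriv_neg (hf : deriv f x₀ < 0) (hx : f x₀ = 0) :
    ∀ᶠ x in 𝓝[<] x₀, 0 < f x := by
  filter_upwards [nhdsWithin_le_nhds (eventually_nhdsWithin_sign_eq_of_deriv_neg hf hx),
    self_mem_nhdsWithin] with x hsign (hlt : x < x₀)
  rwa [← sign_eq_one_iff, hsign, sign_eq_one_iff, sub_pos]

lemma eventually_nhdsGT_neg_of_deriv_neg (hf : deriv f x₀ < 0) (hx : f x₀ = 0) :
    ∀ᶠ x in 𝓝[>] x₀, f x < 0 := by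
  filter_upwards [nhdsWithin_le_nhds (eventually_nhdsWithin_sign_eq_of_deriv_neg hf hx),
    self_mem_nhdsWithin] with x hsign (hlt : x₀ < x)
  rwa [← sign_eq_neg_one_iff, hsign, sign_eq_neg_one_iff, sub_neg]

lemma eventually_nhdsLT_lt_of_deriv_neg (hc : ContinuousAt f x₀)
    (hd : ∀ᶠ x in 𝓝[<] x₀, deriv f x < 0) : ∀ᶠ x in 𝓝[<] x₀, f x₀ < f x := by
  obtain ⟨l, hl, hsub⟩ := mem_nhdsLT_iff_exists_Ioo_subset.1 hd
  filter_upwards [Ioo_mem_nhdsLT hl] with x hx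
  have hanti : StrictAntiOn f (Icc x x₀) := by
    refine strictAntiOn_of_deriv_neg (convex_Icc x x₀) (fun y hy => ?_) fun y hy => ?_
    · rcases hy.2.eq_or_lt with rfl | hyx₀
      · exact hc.continuousWithinAt
      · have hy' : deriv f y < 0 := hsub ⟨hx.1.trans_le hy.1, hyx₀⟩
        exact (differentiableAt_of_deriv_ne_zero hy'.ne).continuousAt.continuousWithinAt
    · rw [interior_Icc] at hy
      exact hsub ⟨hx.1.trans hy.1, hy.2⟩
  exact hanti (left_mem_Icc.2 hx.2.le) (right_mem_Icc.2 hx.2.le) hx.2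

end SignNearZero

lemma IsPreconnected.neg_of_ne_zero {X : Type*} [TopologicalSpace X] {s : Set X}
    (hs : IsPreconnected s) {f : X → ℝ} (hf : ContinuousOn f s) (hne : ∀ x ∈ s, f x ≠ 0)
    {x₀ : X} (hx₀ : x₀ ∈ s) (hneg : f x₀ < 0) : ∀ x ∈ s, f x < 0 := by
  intro x hx
  by_contra! hpos
  obtain ⟨y, hy, hy0⟩ := hs.intermediate_value hx₀ hx hf ⟨hneg.le, hpos⟩
  exact hne y hy hy0

lemma csInf_zeros_Ioi_mem {v : ℝ → ℝ} {a : ℝ} (hv : ContinuousOn v (Ioi a))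
    (hnear : ∀ᶠ x in 𝓝[>] a, v x ≠ 0) (hne : {x | a < x ∧ v x = 0}.Nonempty) :
    sInf {x | a < x ∧ v x = 0} ∈ {x | a < x ∧ v x = 0} := by
  obtain ⟨b, hab, hb⟩ := mem_nhdsGT_iff_exists_Ioo_subset.1 hnear
  have hzeros : {x | a < x ∧ v x = 0} = Ici b ∩ v ⁻¹' {0} := by
    ext x
    constructor
    · rintro ⟨hax, hx⟩
      exact ⟨not_lt.1 fun hxb => hb ⟨hax, hxb⟩ hx, hx⟩
    · rintro ⟨hbx, hx⟩
      exact ⟨lt_of_lt_of_le hab hbx, hx⟩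
  rw [hzeros] at hne ⊢
  have hclosed : IsClosed (Ici b ∩ v ⁻¹' {0}) :=
    (hv.mono (Ici_subset_Ioi.2 hab)).preimage_isClosed_of_isClosed isClosed_Ici
      isClosed_singleton
  exact hclosed.csInf_mem hne ⟨b, fun _ hx => hx.1⟩

lemma tendsto_atTop_of_le_hasDerivAt {v v' : ℝ → ℝ} {Y c : ℝ} (hc : 0 < c)
    (hv : ∀ y, Y ≤ y → HasDerivAt v (v' y) y) (hle : ∀ y, Y ≤ y → c ≤ v' y) :
    Tendsto v atTop atTop := by
  have hgrowth : ∀ y, Y ≤ y → (v Y - c * Y) + c * y ≤ v y := by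
    intro y hy
    have := (convex_Ici Y).mul_sub_le_image_sub_of_le_deriv
      (fun x hx => (hv x hx).continuousAt.continuousWithinAt)
      (fun x hx => (hv x (interior_subset hx)).differentiableAt.differentiableWithinAt)
      (fun x hx => (hv x (interior_subset hx)).deriv ▸ hle x (interior_subset hx))
      Y (mem_Ici.2 le_rfl) y hy hy
    linarith
  exact tendsto_atTop_mono' atTop (eventually_atTop.2 ⟨Y, hgrowth⟩)
    (tendsto_atTop_add_const_left _ _ (tendsto_id.const_mul_atTop hc))

section ODE

variable {μ σ δ : ℝ}

lemma h_zero_eq (μ σ δ y : ℝ) : h μ σ δ y 0 = 2 * sigmoid y - 2 * μ / σ ^ 2 := by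
  simp only [h, sigmoid_def]
  ring

lemma sigmoid_y0 (hμ : 0 < μ) (hμσ : μ < σ ^ 2) : sigmoid (y0 μ σ) = μ / σ ^ 2 := by
  have hpos : 0 < σ ^ 2 / μ - 1 := by rw [sub_pos, one_lt_div hμ]; exact hμσ
  rw [sigmoid_def, y0, neg_neg, exp_log hpos, add_sub_cancel, inv_div]

lemma h_zero_eq_sub (hμ : 0 < μ) (hμσ : μ < σ ^ 2) (y : ℝ) :
    h μ σ δ y 0 = 2 * (sigmoid y - sigmoid (y0 μ σ)) := by
  rw [h_zero_eq, sigmoid_y0 hμ hμσ]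
  ring

lemma h_zero_le_h_of_nonpos (hμ : 0 ≤ μ) {y z : ℝ} (hy : 2 * μ ≤ δ * (1 + exp y))
    (hz : z ≤ 0) : h μ σ δ y 0 ≤ h μ σ δ y z := by
  have hdiff : h μ σ δ y z - h μ σ δ y 0 = -z * (2 * sigmoid y + (1 - z)
      + 2 * (δ * (1 + exp y) * (1 - z) ^ 2 - 2 * μ + μ * z) / σ ^ 2) := by
    simp only [h, sigmoid_def]
    ring
  have hnum : 0 ≤ δ * (1 + exp y) * (1 - z) ^ 2 - 2 * μ + μ * z := by
    nlinarith [mul_le_mul_of_nonneg_right hy (sq_nonneg (1 - z)), mul_nonneg hμ (sq_nonneg z),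
      mul_nonneg hμ (neg_nonneg.2 hz)]
  have hfactor : 0 ≤ 2 * sigmoid y + (1 - z)
      + 2 * (δ * (1 + exp y) * (1 - z) ^ 2 - 2 * μ + μ * z) / σ ^ 2 := by
    have : 0 ≤ 2 * (δ * (1 + exp y) * (1 - z) ^ 2 - 2 * μ + μ * z) / σ ^ 2 := by positivity
    linarith [sigmoid_pos y]
  linarith [mul_nonneg (neg_nonneg.2 hz) hfactor]

lemma hasDerivAt_h_comp_of_eq_zero {v : ℝ → ℝ} {x : ℝ} (hv : HasDerivAt v 0 x)
    (hx : v x = 0) : HasDerivAt (fun y => h μ σ δ y (v y)) (2 * (sigmoid x * (1 - sigmoid x))) x := by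
  have hs := (hasDerivAt_sigmoid x).const_mul 2
  have he := (hasDerivAt_exp x).const_add 1
  have hB := ((hs.const_sub (4 * μ / σ ^ 2)).sub_const 1).sub (he.const_mul (2 * δ / σ ^ 2))
  have hC := (he.const_mul (4 * δ / σ ^ 2)).const_add (-(2 * μ) / σ ^ 2 + 1)
  have hD := he.const_mul (2 * δ / σ ^ 2)
  have H := (((hs.const_add (-(2 * μ) / σ ^ 2)).add (hB.mul hv)).add (hC.mul (hv.pow 2))).sub
    (hD.mul (hv.pow 3))
  refine (H.congr_deriv (by simp [hx])).congr_of_eventuallyEq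
    (Eventually.of_forall fun y => ?_)
  simp only [h, sigmoid_def, Pi.add_apply, Pi.sub_apply, Pi.mul_apply, Pi.pow_apply]
  ring

variable {v : ℝ → ℝ}

lemma not_eventually_neg_of_hasDerivAt_h (hμ : 0 < μ) (hμσ : μ < σ ^ 2) (hδ : 0 < δ)
    (hv : ∀ᶠ y in atTop, HasDerivAt v (h μ σ δ y (v y)) y) : ¬ ∀ᶠ y in atTop, v y < 0 := by
  intro hneg
  have hlarge : ∀ᶠ y in atTop, y0 μ σ < y ∧ 2 * μ ≤ δ * (1 + exp y) :=
    (eventually_gt_atTop _).and <|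
      ((tendsto_atTop_add_const_left _ 1 tendsto_exp_atTop).const_mul_atTop hδ).eventually_ge_atTop _
  obtain ⟨Y, hY⟩ := eventually_atTop.1 (hv.and (hneg.and hlarge))
  have hc : 0 < h μ σ δ Y 0 := by
    rw [h_zero_eq_sub hμ hμσ]
    linarith [sigmoid_lt (hY Y le_rfl).2.2.1]
  have hgrow : Tendsto v atTop atTop := by
    refine tendsto_atTop_of_le_hasDerivAt hc (fun y hy => (hY y hy).1) fun y hy => ?_
    calc h μ σ δ Y 0 ≤ h μ σ δ y 0 := by simp only [h_zero_eq]; gcongr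
      _ ≤ h μ σ δ y (v y) := h_zero_le_h_of_nonpos hμ.le (hY y hy).2.2.2 (hY y hy).2.1.le
  obtain ⟨y, hpos, hneg⟩ := ((hgrow.eventually_gt_atTop 0).and hneg).exists
  exact hpos.not_gt hneg

lemma eventually_nhdsLT_y0_pos_of_hasDerivAt_h (hμ : 0 < μ) (hμσ : μ < σ ^ 2)
    (hv : ∀ᶠ y in 𝓝 (y0 μ σ), HasDerivAt v (h μ σ δ y (v y)) y) (h0 : v (y0 μ σ) = 0) :
    ∀ᶠ y in 𝓝[<] y0 μ σ, 0 < v y := by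
  have hderiv : deriv v =ᶠ[𝓝 (y0 μ σ)] fun y => h μ σ δ y (v y) :=
    hv.mono fun _ hy => hy.deriv
  have hh0 : h μ σ δ (y0 μ σ) 0 = 0 := by rw [h_zero_eq_sub hμ hμσ, sub_self, mul_zero]
  have hv0 : HasDerivAt v 0 (y0 μ σ) := by simpa [h0, hh0] using hv.self_of_nhds
  have hsecond : 0 < deriv (deriv v) (y0 μ σ) := by
    rw [hderiv.deriv_eq, (hasDerivAt_h_comp_of_eq_zero hv0 h0).deriv]
    have := sigmoid_pos (y0 μ σ)
    have := sigmoid_lt_one (y0 μ σ)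
    nlinarith
  filter_upwards [eventually_nhdsLT_lt_of_deriv_neg hv0.continuousAt
    (eventually_nhdsLT_neg_of_deriv_pos hsecond hv0.deriv)] with y hy
  rwa [h0] at hy

lemma y0_lt_of_neg_on_Ioo (hμ : 0 < μ) (hμσ : μ < σ ^ 2) {a β : ℝ}
    (hv : ∀ y, a < y → HasDerivAt v (h μ σ δ y (v y)) y) (hβ : a < β) (hvβ : v β = 0)
    (hneg : ∀ y ∈ Ioo a β, v y < 0) : y0 μ σ < β := by
  by_contra! hle
  have hpos : ∀ᶠ y in 𝓝[<] β, 0 < v y := by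
    rcases hle.lt_or_eq with hlt | rfl
    · refine eventually_nhdsLT_pos_of_deriv_neg ?_ hvβ
      rw [(hv β hβ).deriv, hvβ, h_zero_eq_sub hμ hμσ]
      linarith [sigmoid_lt hlt]
    · exact eventually_nhdsLT_y0_pos_of_hasDerivAt_h hμ hμσ
        (eventually_of_mem (Ioi_mem_nhds hβ) hv) hvβ
  obtain ⟨y, hpos, hy⟩ := (hpos.and (Ioo_mem_nhdsLT hβ)).exists
  exact hpos.not_gt (hneg y hy)

end ODE

theorem first_zero_exists_and_exceeds_y0_general
    (μ σ δ Δ : ℝ) (hμ : 0 < μ) (hμσ : μ < σ^2) (hδ : 0 < δ) (hΔ : 0 < Δ)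
    (g : ℝ → ℝ)
    (hg : ContDiffOn ℝ 2 g (Ici (y0 μ σ - Δ)))
    (hg0' : deriv g (y0 μ σ - Δ) = 0)
    (hODE : ∀ y, y0 μ σ - Δ ≤ y → deriv (deriv g) y = h μ σ δ y (deriv g y)) :
    {y | y0 μ σ - Δ < y ∧ deriv g y = 0}.Nonempty ∧
    y0 μ σ < sInf {y | y0 μ σ - Δ < y ∧ deriv g y = 0} ∧
    deriv g (sInf {y | y0 μ σ - Δ < y ∧ deriv g y = 0}) = 0 ∧
    (∀ y ∈ Ioo (y0 μ σ - Δ) (sInf {y | y0 μ σ - Δ < y ∧ deriv g y = 0}),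
      deriv g y < 0) ∧
    StrictAntiOn g (Icc (y0 μ σ - Δ) (sInf {y | y0 μ σ - Δ < y ∧ deriv g y = 0})) := by
  set a := y0 μ σ - Δ
  set Z := {y | a < y ∧ deriv g y = 0}
  have hv : ∀ y, a < y → HasDerivAt (deriv g) (h μ σ δ y (deriv g y)) y := fun y hy => by
    rw [← hODE y hy.le]
    refine (DifferentiableOn.differentiableAt ?_ (Ioi_mem_nhds hy)).hasDerivAt
    exact ((hg.mono Ioi_subset_Ici_self).deriv_of_isOpen isOpen_Ioi le_rfl).differentiableOn
      one_ne_zero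
  have hcont : ContinuousOn (deriv g) (Ioi a) := fun y hy =>
    (hv y hy).continuousAt.continuousWithinAt
  have hnear : ∀ᶠ y in 𝓝[>] a, deriv g y < 0 := by
    refine eventually_nhdsGT_neg_of_deriv_neg ?_ hg0'
    rw [hODE a le_rfl, hg0', h_zero_eq_sub hμ hμσ]
    linarith [sigmoid_lt (show a < y0 μ σ by linarith)]
  have hZ : Z.Nonempty := by
    by_contra hZ
    obtain ⟨x₀, hx₀, hax₀⟩ := (hnear.and self_mem_nhdsWithin).exists
    have hneg :=
      isPreconnected_Ioi.neg_of_ne_zero hcont (fun y hy h0 => hZ ⟨y, hy, h0⟩) hax₀ hx₀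
    exact not_eventually_neg_of_hasDerivAt_h hμ hμσ hδ ((eventually_gt_atTop a).mono hv)
      ((eventually_gt_atTop a).mono hneg)
  obtain ⟨hβ, hvβ⟩ : sInf Z ∈ Z :=
    csInf_zeros_Ioi_mem hcont (hnear.mono fun _ => ne_of_lt) hZ
  have hneg : ∀ y ∈ Ioo a (sInf Z), deriv g y < 0 := by
    obtain ⟨x₀, hx₀, hax₀⟩ := (hnear.and (Ioo_mem_nhdsGT hβ)).exists
    exact isPreconnected_Ioo.neg_of_ne_zero (hcont.mono Ioo_subset_Ioi_self)
      (fun y hy h0 => notMem_of_lt_csInf hy.2 ⟨a, fun _ hz => hz.1.le⟩ ⟨hy.1, h0⟩) hax₀ hx₀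
  refine ⟨hZ, y0_lt_of_neg_on_Ioo hμ hμσ hv hβ hvβ hneg, hvβ, hneg, ?_⟩
  exact strictAntiOn_of_deriv_neg (convex_Icc a (sInf Z))
    (hg.continuousOn.mono Icc_subset_Ici_self) (by simpa only [interior_Icc] using hneg)

/-- The first zero β̄_Δ of g' after y₀ - Δ exists, exceeds y₀, and g is
strictly decreasing up to it. -/
theorem first_zero_exists_and_exceeds_y0
    (μ σ δ Cbar Δ : ℝ) (hμ : 0 < μ) (hμσ : μ < σ^2) (hδ : 0 < δ) (hΔ : 0 < Δ)
    (g : ℝ → ℝ)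
    (hg : ContDiffOn ℝ 2 g (Ici (y0 μ σ - Δ)))
    (hg0 : g (y0 μ σ - Δ) = Cbar)
    (hg0' : deriv g (y0 μ σ - Δ) = 0)
    (hODE : ∀ y, y0 μ σ - Δ ≤ y → deriv (deriv g) y = h μ σ δ y (deriv g y)) :
    {y | y0 μ σ - Δ < y ∧ deriv g y = 0}.Nonempty ∧
    y0 μ σ < sInf {y | y0 μ σ - Δ < y ∧ deriv g y = 0} ∧
    deriv g (sInf {y | y0 μ σ - Δ < y ∧ deriv g y = 0}) = 0 ∧
    (∀ y ∈ Ioo (y0 μ σ - Δ) (sInf {y | y0 μ σ - Δ < y ∧ deriv g y = 0}),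
      deriv g y < 0) ∧
    StrictAntiOn g (Icc (y0 μ σ - Δ) (sInf {y | y0 μ σ - Δ < y ∧ deriv g y = 0})) :=
  first_zero_exists_and_exceeds_y0_general μ σ δ Δ hμ hμσ hδ hΔ g hg hg0' hODE
end

section
/- There exist Y ∈ ℝ and ε > 0 such that for all y ≥ Y and all z ∈ [−M', 0], one has h(y, z) ≥ ε. (That is, for sufficiently large y, the right-hand side of the ODE is positive and bounded away from zero uniformly over nonpositive slopes of magnitude at most M'.) -/
open Real Set Filter Topology

/-! With `A = 2μ/σ²`, `B = 2/(1+e^{-y})`, `C = (2δ/σ²)(1+e^y)` and `t = -z`, the cubic `h` factors as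
`h = (B - A) + t·((B + 1 - 2A) + (1 - A)t + C(1 + t)²)`. Since `A < 2` and `B > 0`, the bracket is at
least `-3 - t + C(1 + t)`, which is `≥ 0` as soon as `C ≥ 3`; so for large `y`, `h ≥ B - A` for every
slope `z ≤ 0`, and `B - A → 2 - A > 0`. -/

lemma h_eq_factored (μ σ δ y z : ℝ) :
    h μ σ δ y z = (2 / (1 + exp (-y)) - 2*μ/σ^2) + (-z) *
      ((2 / (1 + exp (-y)) + 1 - 2 * (2*μ/σ^2)) + (1 - 2*μ/σ^2) * (-z)
        + 2*δ/σ^2 * (1 + exp y) * (1 + -z)^2) := by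
  unfold h
  ring

lemma sub_le_h_of_nonpos {μ σ δ y z : ℝ} (hA : 2*μ/σ^2 ≤ 2) (hC : 3 ≤ 2*δ/σ^2 * (1 + exp y))
    (hz : z ≤ 0) : 2 / (1 + exp (-y)) - 2*μ/σ^2 ≤ h μ σ δ y z := by
  rw [h_eq_factored]
  set A := 2*μ/σ^2
  set B := 2 / (1 + exp (-y))
  set C := 2*δ/σ^2 * (1 + exp y)
  set t := -z
  have hB : 0 ≤ B := by positivity
  have ht : 0 ≤ t := neg_nonneg.2 hz
  have hCt : 3 * (1 + t) ≤ C * (1 + t)^2 := by nlinarith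
  have hbracket : 0 ≤ (B + 1 - 2*A) + (1 - A) * t + C * (1 + t)^2 := by nlinarith
  exact le_add_of_nonneg_right (mul_nonneg ht hbracket)

lemma tendsto_two_div_one_add_exp_neg :
    Tendsto (fun y : ℝ => 2 / (1 + exp (-y))) atTop (𝓝 2) := by
  have := ((tendsto_exp_neg_atTop_nhds_zero.const_add 1).inv₀ (by norm_num)).const_mul 2
  simpa [div_eq_mul_inv] using this

lemma tendsto_mul_one_add_exp {c : ℝ} (hc : 0 < c) :
    Tendsto (fun y : ℝ => c * (1 + exp y)) atTop atTop :=
  (tendsto_atTop_add_const_left _ 1 tendsto_exp_atTop).const_mul_atTop hc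

/-- For sufficiently large y, the right-hand side of the ODE is positive and
bounded away from zero, uniformly over slopes in [-M', 0]. -/
theorem h_uniformly_pos_for_large_y
    (μ σ δ : ℝ) (hμ : 0 < μ) (hμσ : μ < σ^2) (hδ : 0 < δ) :
    ∃ Y ε : ℝ, 0 < ε ∧
      ∀ y : ℝ, Y ≤ y → ∀ z ∈ Icc (-(M' μ σ δ)) 0, ε ≤ h μ σ δ y z := by
  have hσ : 0 < σ^2 := hμ.trans hμσ
  have hA : 2*μ/σ^2 < 2 := by rw [div_lt_iff₀ hσ]; linarith
  set ε := (2 - 2*μ/σ^2) / 2 with hε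
  obtain ⟨Y, hY⟩ := eventually_atTop.1 <|
    (tendsto_two_div_one_add_exp_neg.eventually_const_lt (by linarith : 2*μ/σ^2 + ε < 2)).and
      ((tendsto_mul_one_add_exp (by positivity : 0 < 2*δ/σ^2)).eventually_ge_atTop 3)
  refine ⟨Y, ε, by linarith, fun y hy z hz => ?_⟩
  obtain ⟨hB, hC⟩ := hY y hy
  linarith [sub_le_h_of_nonpos hA.le hC hz.2]
end

section
/- For every ε > 0 there exists Δ₀ ∈ (0, 1] such that for every Δ ∈ (0, Δ₀) and every function g that is twice continuously differentiable on [y₀ − Δ, ∞) with g(y₀ − Δ) = C̄, g'(y₀ − Δ) = 0 and g''(y) = h(y, g'(y)) for all y ≥ y₀ − Δ, the first zero β̄_Δ := inf{ y > y₀ − Δ : g'(y) = 0 } of g' satisfies β̄_Δ − (y₀ − Δ) < ε and C̄ − g(β̄_Δ) < ε. In other words, g(β̄_Δ) → C̄ as Δ → 0⁺. -/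
open Real Set

/-!
Let `u = g'` and `a = y₀ - Δ`. For `|z| ≤ 1` and `y` near `y₀`, `h(y, z) = h(y, 0) + O(|z|)`,
where `h(·, 0)` is increasing, continuous and vanishes at `y₀`; so `u'(a) = h(a, 0)` is negative
but tends to `0` with `Δ`. Comparing `u` with straight lines (fences): on `[a, y₀ + 2η]` it stays
above the line `2 h(a, 0) (y - a)`, which is uniformly small, and on `[y₀ + η, y₀ + 2η]` the
forcing `h(y, 0) ≥ h(y₀ + η, 0) > 0` lifts it above zero. Hence `g'` vanishes before `y₀ + 2η`,
and up to there `g` loses only a small amount.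
-/

theorem linear_le_of_hasDerivAt_ode {F : ℝ → ℝ → ℝ} {u : ℝ → ℝ} {p q c s K : ℝ}
    (hu : ∀ x ∈ Icc p q, HasDerivAt u (F x (u x)) x)
    (hLip : ∀ x ∈ Icc p q, ∀ z, |z| ≤ 1 → |F x z - F x 0| ≤ K * |z|) (hK : 0 ≤ K)
    (hmono : MonotoneOn (fun x => F x 0) (Icc p q))
    (hsmall : |c| + |s| * (q - p) ≤ 1) (hs : s < F p 0 - K * (|c| + |s| * (q - p)))
    (hp : c ≤ u p) : ∀ x ∈ Icc p q, c + s * (x - p) ≤ u x := by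
  have hcont : ContinuousOn u (Icc p q) := fun x hx => (hu x hx).continuousAt.continuousWithinAt
  have hB : ∀ x, HasDerivAt (fun x => -(c + s * (x - p))) (-s) x := fun x => by
    simpa using ((((hasDerivAt_id x).sub_const p).const_mul s).const_add c).fun_neg
  have key := image_le_of_deriv_right_lt_deriv_boundary' (f := fun x => -u x)
    (f' := fun x => -F x (u x)) hcont.neg
    (fun x hx => (hu x (Ico_subset_Icc_self hx)).neg.hasDerivWithinAt) (by simpa using hp)
    (fun x _ => (hB x).continuousAt.continuousWithinAt) (fun x _ => (hB x).hasDerivWithinAt) ?_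
  · intro x hx
    linarith [key hx]
  intro x hx hux
  have hx' : x ∈ Icc p q := Ico_subset_Icc_self hx
  have hux_le : |u x| ≤ |c| + |s| * (q - p) := by
    rw [neg_inj.mp hux]
    calc |c + s * (x - p)| ≤ |c| + |s| * (x - p) := by
          simpa [abs_mul, abs_of_nonneg (sub_nonneg.2 hx.1)] using abs_add_le c (s * (x - p))
      _ ≤ |c| + |s| * (q - p) := by gcongr; exact hx.2.le
  have hF := abs_le.mp (hLip x hx' (u x) (hux_le.trans hsmall))
  have hFpx : F p 0 ≤ F x 0 := hmono (left_mem_Icc.2 (hx.1.trans hx.2.le)) hx' hx.1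
  linarith [hF.1, mul_le_mul_of_nonneg_left hux_le hK]

theorem exists_mem_Ioo_eq_zero_of_deriv_neg {u : ℝ → ℝ} {a b : ℝ} (hab : a < b)
    (hu : ContinuousOn u (Icc a b)) (hda : deriv u a < 0) (ha : u a = 0) (hb : 0 < u b) :
    ∃ z ∈ Ioo a b, u z = 0 := by
  obtain ⟨x, hsign, hx⟩ := (((eventually_nhdsWithin_sign_eq_of_deriv_neg hda ha).filter_mono
    nhdsWithin_le_nhds).and (Ioo_mem_nhdsGT hab)).exists
  have hux : u x < 0 := by
    rwa [sign_neg (sub_neg.2 hx.1), sign_eq_neg_one_iff] at hsign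
  obtain ⟨z, hz, hz0⟩ := intermediate_value_Ioo hx.2.le (hu.mono (Icc_subset_Icc hx.1.le le_rfl))
    ⟨hux, hb⟩
  exact ⟨z, ⟨hx.1.trans hz.1, hz.2⟩, hz0⟩

theorem hasDerivAt_deriv_of_contDiffOn_Ici {F : ℝ → ℝ → ℝ} {g : ℝ → ℝ} {a : ℝ}
    (hg : ContDiffOn ℝ 2 g (Ici a)) (hode : ∀ y, a ≤ y → deriv (deriv g) y = F y (deriv g y))
    (ha : F a (deriv g a) ≠ 0) : ∀ x, a ≤ x → HasDerivAt (deriv g) (F x (deriv g x)) x := by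
  intro x hx
  rw [← hode x hx]
  refine DifferentiableAt.hasDerivAt ?_
  rcases hx.eq_or_lt with rfl | hx
  · -- `deriv (deriv g) a` is not the junk value `0`, so `deriv g` is differentiable at `a`
    exact differentiableAt_of_deriv_ne_zero (hode a le_rfl ▸ ha)
  · have : ContDiffOn ℝ 1 (deriv g) (Ioi a) :=
      (hg.mono Ioi_subset_Ici_self).deriv_of_isOpen isOpen_Ioi (by norm_num)
    exact (this.differentiableOn one_ne_zero).differentiableAt (Ioi_mem_nhds hx)

theorem abs_cubic_le {b q r z : ℝ} (hz : |z| ≤ 1) :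
    |b * z + q * z ^ 2 - r * z ^ 3| ≤ (|b| + |q| + |r|) * |z| := by
  have h2 : |z| ^ 2 ≤ |z| := by nlinarith [abs_nonneg z]
  have h3 : |z| ^ 3 ≤ |z| := by nlinarith [abs_nonneg z]
  calc |b * z + q * z ^ 2 - r * z ^ 3| ≤ |b * z| + |q * z ^ 2| + |r * z ^ 3| :=
        (abs_sub _ _).trans (add_le_add_left (abs_add_le _ _) _)
    _ = |b| * |z| + |q| * |z| ^ 2 + |r| * |z| ^ 3 := by simp only [abs_mul, abs_pow]
    _ ≤ (|b| + |q| + |r|) * |z| := by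
        nlinarith [mul_le_mul_of_nonneg_left h2 (abs_nonneg q),
          mul_le_mul_of_nonneg_left h3 (abs_nonneg r)]

theorem first_zero_estimate {F : ℝ → ℝ → ℝ} {g : ℝ → ℝ} {a y₁ b K M s : ℝ}
    (hg : ContDiffOn ℝ 2 g (Ici a)) (hg' : deriv g a = 0)
    (hode : ∀ y, a ≤ y → deriv (deriv g) y = F y (deriv g y))
    (hLip : ∀ x ∈ Icc a b, ∀ z, |z| ≤ 1 → |F x z - F x 0| ≤ K * |z|) (hK : 0 ≤ K)
    (hmono : MonotoneOn (fun x => F x 0) (Icc a b)) (hay₁ : a ≤ y₁) (hy₁b : y₁ ≤ b) (hs : 0 ≤ s)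
    (hFa : F a 0 < 0) (hKT : 2 * K * (b - a) < 1) (hM : -2 * F a 0 * (b - a) ≤ M)
    (hsmall : M + s * (b - y₁) ≤ 1) (hascent : s < F y₁ 0 - K * (M + s * (b - y₁)))
    (hrise : M < s * (b - y₁)) :
    sInf {y | a < y ∧ deriv g y = 0} ≤ b ∧
      g a - g (sInf {y | a < y ∧ deriv g y = 0}) ≤ M * (b - a) := by
  have hab : a ≤ b := hay₁.trans hy₁b
  have hM0 : 0 ≤ M := by nlinarith
  have hu : ∀ x ∈ Icc a b, HasDerivAt (deriv g) (F x (deriv g x)) x := fun x hx =>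
    hasDerivAt_deriv_of_contDiffOn_Ici hg hode (by rw [hg']; exact hFa.ne) x hx.1
  have hlower : ∀ x ∈ Icc a b, -M ≤ deriv g x := by
    intro x hx
    have hline := linear_le_of_hasDerivAt_ode hu hLip hK hmono (c := 0) (s := 2 * F a 0)
      (by rw [abs_zero, zero_add, abs_of_neg (by linarith)]; linarith)
      (by rw [abs_zero, zero_add, abs_of_neg (by linarith)]; nlinarith) hg'.ge x hx
    nlinarith [hx.1, hx.2]
  have hpos : -M + s * (b - y₁) ≤ deriv g b :=
    linear_le_of_hasDerivAt_ode (fun x hx => hu x ⟨hay₁.trans hx.1, hx.2⟩)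
      (fun x hx => hLip x ⟨hay₁.trans hx.1, hx.2⟩) hK
      (hmono.mono (Icc_subset_Icc_left hay₁))
      (by rwa [abs_neg, abs_of_nonneg hM0, abs_of_nonneg hs])
      (by rwa [abs_neg, abs_of_nonneg hM0, abs_of_nonneg hs])
      (hlower y₁ ⟨hay₁, hy₁b⟩) b ⟨hy₁b, le_rfl⟩
  obtain ⟨z, hz, hz0⟩ := exists_mem_Ioo_eq_zero_of_deriv_neg (by nlinarith)
    (fun x hx => (hu x hx).continuousAt.continuousWithinAt)
    (by rw [hode a le_rfl, hg']; exact hFa) hg' (by linarith)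
  have hzS : z ∈ {y | a < y ∧ deriv g y = 0} := ⟨hz.1, hz0⟩
  set β := sInf {y | a < y ∧ deriv g y = 0}
  have hβa : a ≤ β := le_csInf ⟨z, hzS⟩ fun y hy => hy.1.le
  have hβb : β ≤ b := (csInf_le ⟨a, fun y hy => hy.1.le⟩ hzS).trans hz.2.le
  have hmvt : -M * (β - a) ≤ g β - g a := (convex_Icc a b).mul_sub_le_image_sub_of_le_deriv
    (hg.continuousOn.mono Icc_subset_Ici_self)
    ((hg.differentiableOn two_ne_zero).mono (interior_subset.trans Icc_subset_Ici_self))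
    (fun x hx => hlower x (interior_subset hx)) a (left_mem_Icc.2 hab) β ⟨hβa, hβb⟩ hβa
  exact ⟨hβb, by nlinarith⟩

theorem first_zero_close_of_ode (F : ℝ → ℝ → ℝ) (y₀ K Cbar : ℝ)
    (hLip : ∀ y ∈ Icc (y₀ - 1) (y₀ + 1), ∀ z, |z| ≤ 1 → |F y z - F y 0| ≤ K * |z|)
    (hmono : StrictMono fun y => F y 0) (hzero : F y₀ 0 = 0)
    (hcont : ContinuousAt (fun y => F y 0) y₀) :
    ∀ ε : ℝ, 0 < ε → ∃ Δ₀ : ℝ, 0 < Δ₀ ∧ Δ₀ ≤ 1 ∧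
      ∀ Δ : ℝ, 0 < Δ → Δ < Δ₀ →
        ∀ g : ℝ → ℝ,
          ContDiffOn ℝ 2 g (Ici (y₀ - Δ)) →
          g (y₀ - Δ) = Cbar →
          deriv g (y₀ - Δ) = 0 →
          (∀ y, y₀ - Δ ≤ y → deriv (deriv g) y = F y (deriv g y)) →
          sInf {y | y₀ - Δ < y ∧ deriv g y = 0} - (y₀ - Δ) < ε ∧
          Cbar - g (sInf {y | y₀ - Δ < y ∧ deriv g y = 0}) < ε := by
  intro ε hε
  have hK : 0 ≤ K := by
    simpa using (abs_nonneg _).trans (hLip y₀ ⟨by linarith, by linarith⟩ 1 (by simp))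
  set η := min ε 1 / (8 * (K + 1))
  have hη : 0 < η := by positivity
  have hηε : η ≤ ε / 8 ∧ η ≤ 1 / 8 ∧ K * η ≤ 1 / 8 := by
    have h8 : η * (8 * (K + 1)) = min ε 1 := div_mul_cancel₀ _ (by positivity)
    refine ⟨?_, ?_, ?_⟩ <;> nlinarith [min_le_left ε 1, min_le_right ε 1]
  have hc₀ : 0 < F (y₀ + η) 0 := hzero.symm.trans_lt (hmono (lt_add_of_pos_right y₀ hη))
  set s := min (F (y₀ + η) 0) 1 / 2 with hs_def
  have hs : 0 < s := by positivity
  have hsc : s ≤ F (y₀ + η) 0 / 2 ∧ s ≤ 1 / 2 :=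
    ⟨by linarith [min_le_left (F (y₀ + η) 0) 1], by linarith [min_le_right (F (y₀ + η) 0) 1]⟩
  obtain ⟨θ, hθ, hθF⟩ := Metric.continuousAt_iff.mp hcont (s * η / 2) (by positivity)
  refine ⟨min θ η, lt_min hθ hη, (min_le_right _ _).trans (by linarith), ?_⟩
  intro Δ hΔ hΔ₀ g hg hgC hg' hode
  have hΔθ : Δ < θ := hΔ₀.trans_le (min_le_left _ _)
  have hΔη : Δ < η := hΔ₀.trans_le (min_le_right _ _)
  have hFa : F (y₀ - Δ) 0 < 0 := (hmono (sub_lt_self y₀ hΔ)).trans_eq hzero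
  have hFa' : -F (y₀ - Δ) 0 < s * η / 2 := by
    have := @hθF (y₀ - Δ) (by
      rwa [Real.dist_eq, sub_sub_cancel_left, abs_neg, abs_of_pos hΔ])
    rwa [Real.dist_eq, hzero, sub_zero, abs_of_neg hFa] at this
  obtain ⟨hβ, hgβ⟩ := first_zero_estimate (y₁ := y₀ + η) (b := y₀ + 2 * η) (M := s * η / 2)
    hg hg' hode (fun x hx => hLip x ⟨by linarith [hx.1], by linarith [hx.2]⟩) hK
    (hmono.monotone.monotoneOn _) (by linarith) (by linarith) hs.le hFa
    (by nlinarith [mul_le_mul_of_nonneg_left hΔη.le hK]) (by nlinarith) (by nlinarith)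
    (by nlinarith) (by nlinarith)
  rw [hgC] at hgβ
  constructor <;> nlinarith

theorem h_apply_zero (μ σ δ y : ℝ) : h μ σ δ y 0 = -(2 * μ) / σ ^ 2 + 2 / (1 + exp (-y)) := by
  simp [h]

theorem exists_abs_h_sub_h_zero_le (μ σ δ Y : ℝ) :
    ∃ K, ∀ y ≤ Y, ∀ z, |z| ≤ 1 → |h μ σ δ y z - h μ σ δ y 0| ≤ K * |z| := by
  refine ⟨3 * |2 * μ / σ ^ 2| + 4 + 4 * (|2 * δ / σ ^ 2| * (1 + exp Y)), fun y hy z hz => ?_⟩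
  have hdiff : h μ σ δ y z - h μ σ δ y 0 =
      (2 * (2 * μ / σ ^ 2) - 2 / (1 + exp (-y)) - 1 - 2 * δ / σ ^ 2 * (1 + exp y)) * z
      + (-(2 * μ / σ ^ 2) + 1 + 2 * (2 * δ / σ ^ 2 * (1 + exp y))) * z ^ 2
      - (2 * δ / σ ^ 2 * (1 + exp y)) * z ^ 3 := by
    unfold h; ring
  have hlogistic : 0 ≤ 2 / (1 + exp (-y)) ∧ 2 / (1 + exp (-y)) ≤ 2 :=
    ⟨by positivity, div_le_self zero_le_two (by linarith [exp_pos (-y)])⟩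
  have hE : |2 * δ / σ ^ 2 * (1 + exp y)| ≤ |2 * δ / σ ^ 2| * (1 + exp Y) := by
    rw [abs_mul, abs_of_pos (by positivity : 0 < 1 + exp y)]
    gcongr
  rw [hdiff]
  refine (abs_cubic_le hz).trans (mul_le_mul_of_nonneg_right ?_ (abs_nonneg z))
  generalize 2 * μ / σ ^ 2 = A, 2 / (1 + exp (-y)) = s, 2 * δ / σ ^ 2 * (1 + exp y) = E at *
  have hA := neg_abs_le A
  have hA' := le_abs_self A
  have hE' := neg_abs_le E
  have hE'' := le_abs_self E
  have h₁ : |2 * A - s - 1 - E| ≤ 2 * |A| + 3 + |E| := abs_le.mpr ⟨by linarith, by linarith⟩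
  have h₂ : |-A + 1 + 2 * E| ≤ |A| + 1 + 2 * |E| := abs_le.mpr ⟨by linarith, by linarith⟩
  linarith

theorem strictMono_h_zero (μ σ δ : ℝ) : StrictMono fun y => h μ σ δ y 0 := by
  intro y y' hyy'
  simp only [h_apply_zero]
  gcongr

theorem continuous_h_zero (μ σ δ : ℝ) : Continuous fun y => h μ σ δ y 0 := by
  simp only [h_apply_zero]
  exact continuous_const.add (continuous_const.div (by fun_prop) fun y => by positivity)

theorem h_y0_zero {μ σ : ℝ} (δ : ℝ) (hμ : 0 < μ) (hμσ : μ < σ ^ 2) :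
    h μ σ δ (y0 μ σ) 0 = 0 := by
  have hexp : exp (-y0 μ σ) = σ ^ 2 / μ - 1 := by
    rw [y0, neg_neg, exp_log (by linarith [(one_lt_div hμ).2 hμσ])]
  rw [h_apply_zero, hexp]
  field_simp
  ring

theorem g_at_first_zero_tendsto_Cbar_general
    (μ σ δ Cbar : ℝ) (hμ : 0 < μ) (hμσ : μ < σ^2) :
    ∀ ε : ℝ, 0 < ε → ∃ Δ₀ : ℝ, 0 < Δ₀ ∧ Δ₀ ≤ 1 ∧
      ∀ Δ : ℝ, 0 < Δ → Δ < Δ₀ →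
        ∀ g : ℝ → ℝ,
          ContDiffOn ℝ 2 g (Ici (y0 μ σ - Δ)) →
          g (y0 μ σ - Δ) = Cbar →
          deriv g (y0 μ σ - Δ) = 0 →
          (∀ y, y0 μ σ - Δ ≤ y → deriv (deriv g) y = h μ σ δ y (deriv g y)) →
          sInf {y | y0 μ σ - Δ < y ∧ deriv g y = 0} - (y0 μ σ - Δ) < ε ∧
          Cbar - g (sInf {y | y0 μ σ - Δ < y ∧ deriv g y = 0}) < ε := by
  obtain ⟨K, hK⟩ := exists_abs_h_sub_h_zero_le μ σ δ (y0 μ σ + 1)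
  exact first_zero_close_of_ode (h μ σ δ) (y0 μ σ) K Cbar (fun y hy => hK y hy.2)
    (strictMono_h_zero μ σ δ) (h_y0_zero δ hμ hμσ) (continuous_h_zero μ σ δ).continuousAt

/-- Step 1 of the proof of Proposition p:FBVP: g(β̄_Δ) → C̄ as Δ → 0⁺. -/
theorem g_at_first_zero_tendsto_Cbar
    (μ σ δ Cbar : ℝ) (hμ : 0 < μ) (hμσ : μ < σ^2) (hδ : 0 < δ) :
    ∀ ε : ℝ, 0 < ε → ∃ Δ₀ : ℝ, 0 < Δ₀ ∧ Δ₀ ≤ 1 ∧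
      ∀ Δ : ℝ, 0 < Δ → Δ < Δ₀ →
        ∀ g : ℝ → ℝ,
          ContDiffOn ℝ 2 g (Ici (y0 μ σ - Δ)) →
          g (y0 μ σ - Δ) = Cbar →
          deriv g (y0 μ σ - Δ) = 0 →
          (∀ y, y0 μ σ - Δ ≤ y → deriv (deriv g) y = h μ σ δ y (deriv g y)) →
          sInf {y | y0 μ σ - Δ < y ∧ deriv g y = 0} - (y0 μ σ - Δ) < ε ∧
          Cbar - g (sInf {y | y0 μ σ - Δ < y ∧ deriv g y = 0}) < ε :=
  g_at_first_zero_tendsto_Cbar_general μ σ δ Cbar hμ hμσ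
end

section
/- Let σ > 0, μ, δ ∈ ℝ, and let x ∈ ℝ. Let f be twice differentiable at x with p := f'(x) satisfying p ∉ {0, 1}, and set v := f(x), σ̃ := σ/(p − 1), and μ̃ := −(μ − σ²/2) + (σ²/2)·(p/(p − 1))²·(1 − e^{−v})/(1 + e^{−v}). Then (1/2)(σ + σ̃)² − (μ − σ²/2 + μ̃) = (σ + σ̃)²/(1 + e^{v}) ≠ 0, and the condition μ − σ²/2 + μ̃ + δ(σ + σ̃)²/((1/2)(σ + σ̃)² − (μ − σ²/2 + μ̃)) = f'(x)·μ̃ + f''(x)·σ̃²/2 (condition (cond2)) holds if and only if f''(x) = (2δ/σ²)(1+e^{v}) + (2μ/σ² − 1 − (4δ/σ²)(1+e^{v}))·p + (−4μ/σ² + 2/(1+e^{−v}) + 1 + (2δ/σ²)(1+e^{v}))·p² + (2μ/σ² − 2/(1+e^{−v}))·p³ (the ODE (odef)). -/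
/-!
Since σ + σ̃ = σp/(p - 1), the choice of μ̃ makes μ - σ²/2 + μ̃ = ½(σ + σ̃)² t with
t = (1 - e⁻ᵛ)/(1 + e⁻ᵛ) = tanh(v/2), and ½(1 - t) = 1/(1 + eᵛ) gives the denominator of
(cond2). Condition (cond2) is then an affine equation in f''(x) with leading coefficient
σ̃²/2 ≠ 0; solving it and expanding 2(p - 1)²/σ² times the rest gives (odef).
-/

open Real

lemma inv_one_add_exp_eq (v : ℝ) :
    (1 + exp v)⁻¹ = (1 - (1 - exp (-v)) / (1 + exp (-v))) / 2 := by
  rw [exp_neg]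
  field_simp
  ring

lemma two_div_one_add_exp_neg (v : ℝ) :
    2 / (1 + exp (-v)) = 1 + (1 - exp (-v)) / (1 + exp (-v)) := by
  field_simp
  ring

lemma add_div_sub_one {p : ℝ} (σ : ℝ) (hp1 : p ≠ 1) : σ + σ / (p - 1) = σ * p / (p - 1) := by
  have : p - 1 ≠ 0 := sub_ne_zero.2 hp1
  field_simp
  ring

theorem cond2_iff_odef_general
    (μ σ δ x p v σt μt : ℝ) (hσ : 0 < σ)
    (f : ℝ → ℝ)
    (hp : p = deriv f x) (hp0 : p ≠ 0) (hp1 : p ≠ 1)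
    (hσt : σt = σ/(p - 1))
    (hμt : μt = -(μ - σ^2/2) + (σ^2/2) * (p/(p - 1))^2 * ((1 - exp (-v))/(1 + exp (-v)))) :
    ((1/2)*(σ + σt)^2 - (μ - σ^2/2 + μt) = (σ + σt)^2/(1 + exp v)) ∧
    (σ + σt)^2/(1 + exp v) ≠ 0 ∧
    ((μ - σ^2/2 + μt + δ*(σ + σt)^2/((1/2)*(σ + σt)^2 - (μ - σ^2/2 + μt))
        = deriv f x * μt + deriv (deriv f) x * σt^2/2)
      ↔ deriv (deriv f) x =
          (2*δ/σ^2)*(1 + exp v)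
          + ((2*μ)/σ^2 - 1 - (4*δ/σ^2)*(1 + exp v)) * p
          + (-(4*μ)/σ^2 + 2/(1 + exp (-v)) + 1 + (2*δ/σ^2)*(1 + exp v)) * p^2
          + ((2*μ)/σ^2 - 2/(1 + exp (-v))) * p^3) := by
  have hp1' : p - 1 ≠ 0 := sub_ne_zero.2 hp1
  have hS : σ + σt = σ * p / (p - 1) := hσt ▸ add_div_sub_one σ hp1
  have hS0 : (σ + σt) ^ 2 ≠ 0 := by rw [hS]; positivity
  have hdrift : μ - σ^2/2 + μt = (σ + σt)^2 / 2 * ((1 - exp (-v)) / (1 + exp (-v))) := by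
    rw [hμt, hS]; ring
  have hgap : (1/2)*(σ + σt)^2 - (μ - σ^2/2 + μt) = (σ + σt)^2/(1 + exp v) := by
    rw [hdrift, div_eq_mul_inv _ (1 + exp v), inv_one_add_exp_eq]; ring
  refine ⟨hgap, div_ne_zero hS0 (by positivity), ?_⟩
  rw [hgap, hdrift, mul_div_assoc, div_div_cancel₀ hS0, ← hp, two_div_one_add_exp_neg]
  generalize (1 - exp (-v)) / (1 + exp (-v)) = t at hμt ⊢
  have hsol : (2*δ/σ^2)*(1 + exp v)
          + ((2*μ)/σ^2 - 1 - (4*δ/σ^2)*(1 + exp v)) * p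
          + (-(4*μ)/σ^2 + (1 + t) + 1 + (2*δ/σ^2)*(1 + exp v)) * p^2
          + ((2*μ)/σ^2 - (1 + t)) * p^3
        = ((σ + σt)^2 / 2 * t + δ * (1 + exp v) - p * μt) / (σt ^ 2 / 2) := by
    rw [hS, hμt, hσt]
    field_simp
    ring
  have hk : σt ^ 2 / 2 ≠ 0 := by rw [hσt]; positivity
  rw [hsol, eq_div_iff hk]
  constructor <;> intro h <;> linear_combination -h

/-- With σ̃ and μ̃ determined by (cond1) and (cond3), condition (cond2) is
equivalent to the ODE (odef). -/
theorem cond2_iff_odef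
    (μ σ δ x p v σt μt : ℝ) (hσ : 0 < σ)
    (f : ℝ → ℝ)
    (hf : DifferentiableAt ℝ f x) (hf' : DifferentiableAt ℝ (deriv f) x)
    (hp : p = deriv f x) (hp0 : p ≠ 0) (hp1 : p ≠ 1)
    (hv : v = f x)
    (hσt : σt = σ/(p - 1))
    (hμt : μt = -(μ - σ^2/2) + (σ^2/2) * (p/(p - 1))^2 * ((1 - exp (-v))/(1 + exp (-v)))) :
    ((1/2)*(σ + σt)^2 - (μ - σ^2/2 + μt) = (σ + σt)^2/(1 + exp v)) ∧
    (σ + σt)^2/(1 + exp v) ≠ 0 ∧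
    ((μ - σ^2/2 + μt + δ*(σ + σt)^2/((1/2)*(σ + σt)^2 - (μ - σ^2/2 + μt))
        = deriv f x * μt + deriv (deriv f) x * σt^2/2)
      ↔ deriv (deriv f) x =
          (2*δ/σ^2)*(1 + exp v)
          + ((2*μ)/σ^2 - 1 - (4*δ/σ^2)*(1 + exp v)) * p
          + (-(4*μ)/σ^2 + 2/(1 + exp (-v)) + 1 + (2*δ/σ^2)*(1 + exp v)) * p^2
          + ((2*μ)/σ^2 - 2/(1 + exp (-v))) * p^3) :=
  cond2_iff_odef_general μ σ δ x p v σt μt hσ f hp hp0 hp1 hσt hμt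
end
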